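/- Let (E, L) be a labeled graph and c : E^1 → G label consistent with c = C ∘ L. For β ∈ L^+(E) and g ∈ G, under the identification of labeled paths of (E ×_c G, L_1) with L^+(E) × G, the range set of the labeled path (β, g) equals { (r(μ), g C(β)) : μ ∈ E^+, L(μ) = β } = r(β) × { g C(β) }. -/

import Mathlib

structure DirGraph (V E : Type*) where
  r : E → V
  s : E → V

def IsPath {V E : Type*} (G : DirGraph V E) (l : List E) : Prop :=
  l ≠ [] ∧ List.Chain' (fun e f => G.r e = G.s f) l

def IsLabeledPath {V E Λ : Type*} (G : DirGraph V E) (ℒ : E → Λ) (β : List Λ) : Prop :=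
  ∃ l, IsPath G l ∧ l.map ℒ = β

def relRange {V E Λ : Type*} (G : DirGraph V E) (ℒ : E → Λ) (S : Set V) (β : List Λ) :
    Set V :=
  { v | ∃ l, IsPath G l ∧ l.map ℒ = β ∧ (∃ e ∈ l.head?, G.s e ∈ S) ∧
      ∃ e ∈ l.getLast?, G.r e = v }

def skewGraph {V E Γ : Type*} [Group Γ] (G : DirGraph V E) (c : E → Γ) :
    DirGraph (V × Γ) (E × Γ) where
  r p := (G.r p.1, p.2 * c p.1)
  s p := (G.s p.1, p.2)

def skewLabel {E Λ Γ : Type*} [Group Γ] (ℒ : E → Λ) (d : E → Γ) : E × Γ → Λ × Γ :=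
  fun p => (ℒ p.1, p.2 * d p.1)

/-- The word in `(Λ × Γ)^+` corresponding to `(β, g)` under the identification of
labeled paths of `(E ×_c Γ, ℒ_𝟏)` with `ℒ⁺(E) × Γ`. -/
def skewWord {Λ Γ : Type*} [Group Γ] (C : Λ → Γ) : List Λ → Γ → List (Λ × Γ)
  | [], _ => []
  | a :: rest, g => (a, g) :: skewWord C rest (g * C a)

/-! Since `c = C ∘ ℒ`, the edges of the skew product labeled by the word of `(β, g)` are forced to
sit at the levels `g, g C(β₁), g C(β₁β₂), …`. So these paths are exactly the lifts `skewWord c μ g`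
of the paths `μ` of `E` with `ℒ(μ) = β`, and such a lift ends at `(r(μ), g C(β))`. -/

section SkewProduct

variable {V E Λ Γ : Type*} [Group Γ]

theorem skewWord_eq_nil_iff (C : Λ → Γ) (β : List Λ) (g : Γ) :
    skewWord C β g = [] ↔ β = [] := by
  cases β <;> simp [skewWord]

theorem map_skewLabel_one_eq_skewWord_iff (ℒ : E → Λ) (C : Λ → Γ) :
    ∀ (m : List (E × Γ)) (β : List Λ) (g : Γ),
      m.map (skewLabel ℒ fun _ => (1 : Γ)) = skewWord C β g ↔
        ∃ l : List E, l.map ℒ = β ∧ m = skewWord (C ∘ ℒ) l g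
  | [], β, g => by
    simp [eq_comm (a := ([] : List _)), skewWord_eq_nil_iff]
  | (e, h) :: m, β, g => by
    cases β with
    | nil => simp [skewWord]
    | cons a β =>
      simp only [List.map_cons, skewWord, skewLabel, mul_one, List.cons.injEq, Prod.mk.injEq,
        map_skewLabel_one_eq_skewWord_iff ℒ C m β]
      constructor
      · rintro ⟨⟨rfl, rfl⟩, l, rfl, rfl⟩
        exact ⟨e :: l, rfl, by simp [skewWord]⟩
      · rintro ⟨_ | ⟨e', l⟩, hl, hm⟩
        · simp [skewWord] at hm
        · simp only [skewWord, List.cons.injEq, Prod.mk.injEq, List.map_cons] at hm hl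
          obtain ⟨⟨rfl, rfl⟩, rfl⟩ := hm
          obtain ⟨rfl, rfl⟩ := hl
          exact ⟨⟨rfl, rfl⟩, l, rfl, rfl⟩

theorem isChain_skewWord_iff (G : DirGraph V E) (c : E → Γ) :
    ∀ (l : List E) (g : Γ),
      List.IsChain (fun p q => (skewGraph G c).r p = (skewGraph G c).s q) (skewWord c l g) ↔
        List.IsChain (fun e f => G.r e = G.s f) l
  | [], _ => by simp [skewWord]
  | [e], g => by simp [skewWord]
  | e :: f :: l, g => by
    have ih := isChain_skewWord_iff G c (f :: l) (g * c e)
    simp only [skewWord] at ih ⊢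
    rw [List.isChain_cons_cons, ih, List.isChain_cons_cons]
    simp [skewGraph]

theorem isPath_skewWord_iff (G : DirGraph V E) (c : E → Γ) (l : List E) (g : Γ) :
    IsPath (skewGraph G c) (skewWord c l g) ↔ IsPath G l :=
  and_congr (not_congr (skewWord_eq_nil_iff c l g)) (isChain_skewWord_iff G c l g)

theorem getLast?_skewWord_map_r (G : DirGraph V E) (c : E → Γ) :
    ∀ (l : List E) (g : Γ), (skewWord c l g).getLast?.map (skewGraph G c).r =
      l.getLast?.map fun e => (G.r e, g * (l.map c).prod)
  | [], _ => rfl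
  | [e], g => by simp [skewWord, skewGraph]
  | e :: f :: l, g => by
    have ih := getLast?_skewWord_map_r G c (f :: l) (g * c e)
    simp only [skewWord] at ih ⊢
    rw [List.getLast?_cons_cons, ih, List.getLast?_cons_cons]
    simp [mul_assoc]

theorem mem_getLast?_skewWord_map_r_iff (G : DirGraph V E) (c : E → Γ) (l : List E) (g : Γ)
    (v : V) (h : Γ) : (v, h) ∈ (skewWord c l g).getLast?.map (skewGraph G c).r ↔
      v ∈ l.getLast?.map G.r ∧ h = g * (l.map c).prod := by
  rw [getLast?_skewWord_map_r]
  cases l.getLast? <;> simp [eq_comm]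

end SkewProduct

theorem mem_relRange_univ_iff {V E Λ : Type*} (G : DirGraph V E) (ℒ : E → Λ) (β : List Λ)
    (v : V) : v ∈ relRange G ℒ Set.univ β ↔
      ∃ l, IsPath G l ∧ l.map ℒ = β ∧ v ∈ l.getLast?.map G.r := by
  simp only [relRange, Set.mem_ofPred_eq, Set.mem_univ, and_true, Option.mem_def,
    Option.map_eq_some_iff]
  refine exists_congr fun l => and_congr_right fun hl => and_congr_right fun _ => ?_
  simp [List.head?_eq_some_head hl.1]

theorem stmt10_general {V E Λ Γ : Type*} [Group Γ] (G : DirGraph V E) (ℒ : E → Λ)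
    (c : E → Γ) (C : Λ → Γ) (hc : c = C ∘ ℒ)
    (β : List Λ) (g : Γ) :
    relRange (skewGraph G c) (skewLabel ℒ fun _ => (1 : Γ)) Set.univ (skewWord C β g) =
      (relRange G ℒ Set.univ β) ×ˢ ({g * (β.map C).prod} : Set Γ) := by
  subst hc
  ext ⟨v, h⟩
  simp only [mem_relRange_univ_iff, Set.mem_prod, Set.mem_singleton_iff,
    map_skewLabel_one_eq_skewWord_iff]
  constructor
  · rintro ⟨_, hm, ⟨l, rfl, rfl⟩, hv⟩
    rw [mem_getLast?_skewWord_map_r_iff, ← List.map_map] at hv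
    exact ⟨⟨l, (isPath_skewWord_iff G _ l g).1 hm, rfl, hv.1⟩, hv.2⟩
  · rintro ⟨⟨l, hl, rfl, hv⟩, rfl⟩
    refine ⟨skewWord (C ∘ ℒ) l g, (isPath_skewWord_iff G _ l g).2 hl, ⟨l, rfl, rfl⟩, ?_⟩
    rw [mem_getLast?_skewWord_map_r_iff, List.map_map]
    exact ⟨hv, rfl⟩

/-- For label consistent `c = C ∘ ℒ`, the range set of the labeled path `(β, g)` of
`(E ×_c Γ, ℒ_𝟏)` equals `r(β) × {g C(β)}`. -/
theorem stmt10 {V E Λ Γ : Type*} [Group Γ] (G : DirGraph V E) (ℒ : E → Λ)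
    (c : E → Γ) (C : Λ → Γ) (hc : c = C ∘ ℒ)
    (β : List Λ) (hβ : IsLabeledPath G ℒ β) (g : Γ) :
    relRange (skewGraph G c) (skewLabel ℒ fun _ => (1 : Γ)) Set.univ (skewWord C β g) =
      (relRange G ℒ Set.univ β) ×ˢ ({g * (β.map C).prod} : Set Γ) :=
  stmt10_general G ℒ c C hc β g
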